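/- arXiv:2507.19048 — 2 statements merged into one kernel-verified Lean document; each statement's English description precedes it below -/
import Mathlib

section
/- Let r ≥ 1 and let z = (z₀, z₁, z₂) ∈ Mat(2r × 3r, ℂ) be written in blocks zᵢ ∈ Mat(2r × r, ℂ), and assume det(z₀ | z₁) ≠ 0 and det(z₀ | z₂) ≠ 0. Then there exist g ∈ GL(2r, ℂ), h₀, h₂ ∈ GL(r, ℂ) and h₁ ∈ Mat(r×r, ℂ) such that g · z · h equals the 2r×3r matrix with block rows (1_r, 0, 0) and (0, 1_r, 1_r), where h ∈ Mat(3r × 3r, ℂ) is the block matrix with rows of r×r blocks [[h₀, h₁, 0], [0, h₀, 0], [0, 0, h₂]]. -/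
open Matrix

/-- The `2r × nr` matrix assembled from `n` block columns of size `2r × r`. -/
def ofBlockCols (r n : ℕ) (z : Fin n → Matrix (Fin r ⊕ Fin r) (Fin r) ℂ) :
    Matrix (Fin r ⊕ Fin r) (Fin n × Fin r) ℂ :=
  Matrix.of fun i jk => z jk.1 i jk.2

/-- The `nr × nr` matrix assembled from an `n × n` array of `r × r` blocks. -/
def ofBlockMat (r n : ℕ) (H : Fin n → Fin n → Matrix (Fin r) (Fin r) ℂ) :
    Matrix (Fin n × Fin r) (Fin n × Fin r) ℂ :=
  Matrix.of fun jk lk => H jk.1 lk.1 jk.2 lk.2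

/-! Solve `z₁ = z₀ a + z₂ b` using the invertibility of `(z₀ | z₂)`. Then
`(z₀ | z₁) = (z₀ | z₂) [[1, a], [0, b]]`, so `b` is invertible, and the choice
`h₀ = 1`, `h₁ = -a`, `h₂ = b` turns the block columns of `z` into `(z₀, z₂ b, z₂ b)`.
Finally `g = (z₀ | z₂ b)⁻¹` maps `z₀` to `(1; 0)` and `z₂ b` to `(0; 1)`. -/

section BlockColumns

variable {R n₁ n₂ p : Type*} [CommRing R] [Fintype n₁] [Fintype n₂] [DecidableEq n₁]
  [DecidableEq n₂]

lemma det_fromCols_mul_add_mul (A : Matrix (n₁ ⊕ n₂) n₁ R) (C : Matrix (n₁ ⊕ n₂) n₂ R)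
    (a : Matrix n₁ n₂ R) (b : Matrix n₂ n₂ R) :
    (fromCols A (A * a + C * b)).det = (fromCols A C).det * b.det := by
  have : fromCols A (A * a + C * b) = fromCols A C * fromBlocks 1 a 0 b := by
    rw [fromCols_mul_fromBlocks, Matrix.mul_one, Matrix.mul_zero, add_zero]
  rw [this, det_mul, det_fromBlocks_zero₂₁, det_one, one_mul]

lemma det_fromCols_mul_right (A : Matrix (n₁ ⊕ n₂) n₁ R) (C : Matrix (n₁ ⊕ n₂) n₂ R)
    (b : Matrix n₂ n₂ R) : (fromCols A (C * b)).det = (fromCols A C).det * b.det := by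
  simpa using det_fromCols_mul_add_mul A C 0 b

lemma exists_eq_mul_add_mul_of_isUnit_det_fromCols [Fintype p]
    {A : Matrix (n₁ ⊕ n₂) n₁ R} {C : Matrix (n₁ ⊕ n₂) n₂ R}
    (h : IsUnit (fromCols A C).det) (X : Matrix (n₁ ⊕ n₂) p R) :
    ∃ (a : Matrix n₁ p R) (b : Matrix n₂ p R), X = A * a + C * b := by
  refine ⟨((fromCols A C)⁻¹ * X).toRows₁, ((fromCols A C)⁻¹ * X).toRows₂, ?_⟩
  rw [← fromCols_mul_fromRows, fromRows_toRows, ← Matrix.mul_assoc, mul_nonsing_inv _ h,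
    Matrix.one_mul]

lemma nonsing_inv_mul_fromCols {A : Matrix (n₁ ⊕ n₂) n₁ R} {C : Matrix (n₁ ⊕ n₂) n₂ R}
    (h : IsUnit (fromCols A C).det) :
    (fromCols A C)⁻¹ * A = fromRows 1 0 ∧ (fromCols A C)⁻¹ * C = fromRows 0 1 := by
  rw [← fromCols_ext_iff, fromCols_fromRows_eq_fromBlocks, fromBlocks_one, ← mul_fromCols]
  exact nonsing_inv_mul _ h

end BlockColumns

lemma mul_ofBlockCols (r n : ℕ) (g : Matrix (Fin r ⊕ Fin r) (Fin r ⊕ Fin r) ℂ)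
    (z : Fin n → Matrix (Fin r ⊕ Fin r) (Fin r) ℂ) :
    g * ofBlockCols r n z = ofBlockCols r n (fun j => g * z j) := by
  ext i jk
  simp [ofBlockCols, Matrix.mul_apply]

lemma ofBlockCols_mul_ofBlockMat (r n : ℕ) (z : Fin n → Matrix (Fin r ⊕ Fin r) (Fin r) ℂ)
    (H : Fin n → Fin n → Matrix (Fin r) (Fin r) ℂ) :
    ofBlockCols r n z * ofBlockMat r n H = ofBlockCols r n (fun l => ∑ j, z j * H j l) := by
  ext i lk
  simp only [ofBlockCols, ofBlockMat, Matrix.mul_apply, Matrix.of_apply,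
    Matrix.sum_apply, Fintype.sum_prod_type]

theorem normal_form_partition_21_general (r : ℕ)
    (z : Fin 3 → Matrix (Fin r ⊕ Fin r) (Fin r) ℂ)
    (h01 : (fromCols (z 0) (z 1)).det ≠ 0)
    (h02 : (fromCols (z 0) (z 2)).det ≠ 0) :
    ∃ (g : GL (Fin r ⊕ Fin r) ℂ) (h₀ h₂ : GL (Fin r) ℂ) (h₁ : Matrix (Fin r) (Fin r) ℂ),
      (g : Matrix (Fin r ⊕ Fin r) (Fin r ⊕ Fin r) ℂ) * ofBlockCols r 3 z *
          ofBlockMat r 3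
            ![![(h₀ : Matrix (Fin r) (Fin r) ℂ), h₁, 0],
              ![0, (h₀ : Matrix (Fin r) (Fin r) ℂ), 0],
              ![0, 0, (h₂ : Matrix (Fin r) (Fin r) ℂ)]] =
        ofBlockCols r 3 ![fromRows 1 0, fromRows 0 1, fromRows 0 1] := by
  obtain ⟨a, b, hz₁⟩ := exists_eq_mul_add_mul_of_isUnit_det_fromCols h02.isUnit (z 1)
  have hb : IsUnit b.det := by
    apply isUnit_of_mul_isUnit_right (x := (fromCols (z 0) (z 2)).det)
    rw [← det_fromCols_mul_add_mul, ← hz₁]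
    exact h01.isUnit
  have hC : IsUnit (fromCols (z 0) (z 2 * b)).det := by
    rw [det_fromCols_mul_right]
    exact h02.isUnit.mul hb
  obtain ⟨hg₀, hg₂⟩ := nonsing_inv_mul_fromCols hC
  refine ⟨(GeneralLinearGroup.mk'' _ hC)⁻¹, 1, GeneralLinearGroup.mk'' b hb, -a, ?_⟩
  rw [Matrix.mul_assoc, ofBlockCols_mul_ofBlockMat, mul_ofBlockCols]
  congr 1
  funext l
  fin_cases l
  · simpa [Fin.sum_univ_three, GeneralLinearGroup.coe_inv] using hg₀
  · simpa [Fin.sum_univ_three, GeneralLinearGroup.coe_inv, hz₁] using hg₂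
  · simpa [Fin.sum_univ_three, GeneralLinearGroup.coe_inv] using hg₂

/-- Normal form lemma for `(m, N) = (2r, 3r)`, partition `λ = (2,1)`:
any `z = (z₀, z₁, z₂)` with `det(z₀ | z₁) ≠ 0` and `det(z₀ | z₂) ≠ 0` can be brought,
by the action of `GL(2r, ℂ) × H_{(2,1)}`, to the normal form with block rows
`(1_r, 0, 0)` and `(0, 1_r, 1_r)`. -/
theorem normal_form_partition_21 (r : ℕ) (hr : 1 ≤ r)
    (z : Fin 3 → Matrix (Fin r ⊕ Fin r) (Fin r) ℂ)
    (h01 : (fromCols (z 0) (z 1)).det ≠ 0)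
    (h02 : (fromCols (z 0) (z 2)).det ≠ 0) :
    ∃ (g : GL (Fin r ⊕ Fin r) ℂ) (h₀ h₂ : GL (Fin r) ℂ) (h₁ : Matrix (Fin r) (Fin r) ℂ),
      (g : Matrix (Fin r ⊕ Fin r) (Fin r ⊕ Fin r) ℂ) * ofBlockCols r 3 z *
          ofBlockMat r 3
            ![![(h₀ : Matrix (Fin r) (Fin r) ℂ), h₁, 0],
              ![0, (h₀ : Matrix (Fin r) (Fin r) ℂ), 0],
              ![0, 0, (h₂ : Matrix (Fin r) (Fin r) ℂ)]] =
        ofBlockCols r 3 ![fromRows 1 0, fromRows 0 1, fromRows 0 1] :=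
  normal_form_partition_21_general r z h01 h02
end

section
/- Let r ≥ 1 and let z = (z₁, z₂, z₃, z₄) ∈ Mat(2r × 4r, ℂ) be written in blocks zⱼ ∈ Mat(2r × r, ℂ), and assume det(zᵢ | zⱼ) ≠ 0 for all 1 ≤ i < j ≤ 4. Then there exist g ∈ GL(2r, ℂ), h₁, h₂, h₃, h₄ ∈ GL(r, ℂ), and x ∈ Mat(r×r, ℂ) with det x ≠ 0 and det(1_r − x) ≠ 0, such that g · z · diag(h₁, h₂, h₃, h₄) is the 2r×4r matrix with block rows (1_r, 0, 1_r, 1_r) and (0, 1_r, −1_r, −x). -/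
/-!
Left multiplication by `(z₁ | z₂)⁻¹` turns `z₁, z₂` into `(1; 0), (0; 1)` and `z₃, z₄` into
`(a; b), (c; d)`; the pair conditions for `(1,3)`, `(2,3)`, `(2,4)` then say that `a`, `b`, `c` are
invertible. Multiplying further by `diag(a⁻¹, -b⁻¹)` on the left and by `h = (a, -b, 1, c⁻¹ a)`
on the right gives the normal form with `x = b⁻¹ d c⁻¹ a`. The action multiplies every
`det(zᵢ | zⱼ)` by a nonzero scalar, so `det x ≠ 0` and `det (1 - x) ≠ 0` are the pair conditions
for `(1,4)` and `(3,4)` read off from the normal form.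
-/

open Matrix

theorem ofBlockCols_mul_ofBlockMat_diagonal (r n : ℕ)
    (g : Matrix (Fin r ⊕ Fin r) (Fin r ⊕ Fin r) ℂ)
    (z : Fin n → Matrix (Fin r ⊕ Fin r) (Fin r) ℂ) (h : Fin n → Matrix (Fin r) (Fin r) ℂ) :
    g * ofBlockCols r n z * ofBlockMat r n (fun i j => if i = j then h i else 0) =
      ofBlockCols r n (fun j => g * z j * h j) := by
  ext i ⟨j, k⟩
  simp only [ofBlockCols, ofBlockMat, mul_apply, of_apply, Fintype.sum_prod_type]
  rw [Finset.sum_comm]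
  refine Finset.sum_congr rfl fun l _ => ?_
  rw [Finset.sum_eq_single j (fun j' _ hj' => by simp [hj']) (by simp)]
  simp

section BlockColumns

variable {R : Type*} [CommRing R] {m n : Type*} [Fintype m] [Fintype n] [DecidableEq m]
  [DecidableEq n]

theorem det_fromCols_mul_mul (g : Matrix (m ⊕ n) (m ⊕ n) R) (u : Matrix (m ⊕ n) m R)
    (v : Matrix (m ⊕ n) n R) (h : Matrix m m R) (k : Matrix n n R) :
    (fromCols (g * u * h) (g * v * k)).det = g.det * (fromCols u v).det * (h.det * k.det) := by
  have : fromCols (g * u * h) (g * v * k) = g * fromCols u v * fromBlocks h 0 0 k := by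
    simp [fromCols_mul_fromBlocks]
  rw [this, det_mul, det_mul, det_fromBlocks_zero₂₁]

theorem det_fromCols_fromRows_one_zero (w : Matrix (m ⊕ n) n R) :
    (fromCols (fromRows 1 0) w).det = (toRows₂ w).det := by
  rw [← fromRows_toRows w, fromCols_fromRows_eq_fromBlocks, det_fromBlocks_zero₂₁]
  simp

theorem det_fromCols_fromRows_zero_one (w : Matrix (m ⊕ m) m R) :
    (fromCols (fromRows 0 1) w).det =
      (toRows₁ w).det * (fromBlocks 0 1 1 0 : Matrix (m ⊕ m) (m ⊕ m) R).det := by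
  have : fromCols (fromRows 0 1) w =
      fromBlocks (toRows₁ w) 0 (toRows₂ w) 1 * fromBlocks 0 1 1 0 := by
    rw [fromBlocks_multiply, ← fromCols_fromRows_eq_fromBlocks]
    simp
  rw [this, det_mul, det_fromBlocks_zero₁₂, det_one, mul_one]

end BlockColumns

section NormalForm

variable {K : Type*} [Field K] {m n : Type*} [Fintype m] [Fintype n] [DecidableEq m]
  [DecidableEq n]

theorem exists_mul_eq_fromRows_one_zero_and_fromRows_zero_one {u : Matrix (m ⊕ n) m K}
    {v : Matrix (m ⊕ n) n K} (huv : (fromCols u v).det ≠ 0) :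
    ∃ A : GL (m ⊕ n) K, (A : Matrix (m ⊕ n) (m ⊕ n) K) * u = fromRows 1 0 ∧
      (A : Matrix (m ⊕ n) (m ⊕ n) K) * v = fromRows 0 1 := by
  obtain ⟨B, hB⟩ := (isUnit_iff_isUnit_det _).2 (isUnit_iff_ne_zero.2 huv)
  refine ⟨B⁻¹, fromCols_inj.eq_iff.1 ?_⟩
  rw [← mul_fromCols, ← hB, Units.inv_mul, fromCols_fromRows_eq_fromBlocks, fromBlocks_one]

theorem det_fromCols_ne_zero_of_mul_mul_eq {ι : Type*} {g : GL (m ⊕ m) K} {h : ι → GL m K}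
    {z w : ι → Matrix (m ⊕ m) m K}
    (hw : ∀ j, (g : Matrix (m ⊕ m) (m ⊕ m) K) * z j * (h j : Matrix m m K) = w j) {i j : ι}
    (hz : (fromCols (z i) (z j)).det ≠ 0) : (fromCols (w i) (w j)).det ≠ 0 := by
  rw [← hw, ← hw, det_fromCols_mul_mul]
  exact mul_ne_zero (mul_ne_zero g.det_ne_zero hz)
    (mul_ne_zero (h i).det_ne_zero (h j).det_ne_zero)

def normalFormCols (x : Matrix m m K) : Fin 4 → Matrix (m ⊕ m) m K :=
  ![fromRows 1 0, fromRows 0 1, fromRows 1 (-1), fromRows 1 (-x)]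

theorem det_fromCols_normalFormCols_zero_three (x : Matrix m m K) :
    (fromCols (normalFormCols x 0) (normalFormCols x 3)).det = (-x).det := by
  simp [normalFormCols]

theorem det_fromCols_normalFormCols_two_three (x : Matrix m m K) :
    (fromCols (normalFormCols x 2) (normalFormCols x 3)).det = (1 - x).det := by
  simp [normalFormCols, neg_add_eq_sub]

theorem fromBlocks_mul_mul_eq_normalFormCols (α β γ : GL m K) (d : Matrix m m K)
    {u : Fin 4 → Matrix (m ⊕ m) m K} (h0 : u 0 = fromRows 1 0) (h1 : u 1 = fromRows 0 1)
    (h2 : u 2 = fromRows (α : Matrix m m K) β) (h3 : u 3 = fromRows (γ : Matrix m m K) d)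
    (j : Fin 4) :
    fromBlocks (↑α⁻¹ : Matrix m m K) 0 0 (↑(-β⁻¹) : Matrix m m K) * u j *
        (↑(![α, -β, 1, γ⁻¹ * α] j) : Matrix m m K) =
      normalFormCols
        ((↑β⁻¹ : Matrix m m K) * d * (↑γ⁻¹ : Matrix m m K) * (α : Matrix m m K)) j := by
  fin_cases j <;> simp [normalFormCols, fromBlocks_mul_fromRows, h0, h1, h2, h3, Matrix.mul_assoc]

theorem exists_mul_mul_eq_normalFormCols {z : Fin 4 → Matrix (m ⊕ m) m K}
    (hz : ∀ i j : Fin 4, i < j → (fromCols (z i) (z j)).det ≠ 0) :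
    ∃ (g : GL (m ⊕ m) K) (h : Fin 4 → GL m K) (x : Matrix m m K),
      ∀ j, (g : Matrix (m ⊕ m) (m ⊕ m) K) * z j * (h j : Matrix m m K) = normalFormCols x j := by
  obtain ⟨A, hA0, hA1⟩ :=
    exists_mul_eq_fromRows_one_zero_and_fromRows_zero_one (hz 0 1 (by decide))
  let u (j : Fin 4) : Matrix (m ⊕ m) m K := (A : Matrix (m ⊕ m) (m ⊕ m) K) * z j
  have hu (i j : Fin 4) (hij : i < j) : (fromCols (u i) (u j)).det ≠ 0 :=
    det_fromCols_ne_zero_of_mul_mul_eq (g := A) (h := 1) (fun j => by simp [u]) (hz i j hij)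
  have hdet {M : Matrix m m K} (hM : M.det ≠ 0) : IsUnit M :=
    (isUnit_iff_isUnit_det M).2 (isUnit_iff_ne_zero.2 hM)
  obtain ⟨α, hα⟩ := hdet (M := toRows₁ (u 2)) <| left_ne_zero_of_mul <| by
    simpa only [u, hA1, det_fromCols_fromRows_zero_one] using hu 1 2 (by decide)
  obtain ⟨β, hβ⟩ := hdet (M := toRows₂ (u 2)) <| by
    simpa only [u, hA0, det_fromCols_fromRows_one_zero] using hu 0 2 (by decide)
  obtain ⟨γ, hγ⟩ := hdet (M := toRows₁ (u 3)) <| left_ne_zero_of_mul <| by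
    simpa only [u, hA1, det_fromCols_fromRows_zero_one] using hu 1 3 (by decide)
  have hD : IsUnit (fromBlocks (↑α⁻¹ : Matrix m m K) 0 0 (↑(-β⁻¹) : Matrix m m K)) :=
    isUnit_fromBlocks_zero₂₁.2 ⟨Units.isUnit _, Units.isUnit _⟩
  refine ⟨hD.unit * A, ![α, -β, 1, γ⁻¹ * α],
    (↑β⁻¹ : Matrix m m K) * toRows₂ (u 3) * (↑γ⁻¹ : Matrix m m K) * (α : Matrix m m K),
    fun j => ?_⟩
  rw [Units.val_mul, hD.unit_spec, Matrix.mul_assoc _ _ (z j)]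
  exact fromBlocks_mul_mul_eq_normalFormCols α β γ (toRows₂ (u 3)) hA0 hA1
    (by rw [hα, hβ, fromRows_toRows]) (by rw [hγ, fromRows_toRows]) j

end NormalForm

theorem normal_form_partition_1111_general (r : ℕ)
    (z : Fin 4 → Matrix (Fin r ⊕ Fin r) (Fin r) ℂ)
    (hz : ∀ i j : Fin 4, i < j → (fromCols (z i) (z j)).det ≠ 0) :
    ∃ (g : GL (Fin r ⊕ Fin r) ℂ) (h : Fin 4 → GL (Fin r) ℂ)
      (x : Matrix (Fin r) (Fin r) ℂ),
      x.det ≠ 0 ∧ ((1 : Matrix (Fin r) (Fin r) ℂ) - x).det ≠ 0 ∧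
      (g : Matrix (Fin r ⊕ Fin r) (Fin r ⊕ Fin r) ℂ) * ofBlockCols r 4 z *
          ofBlockMat r 4 (fun i j => if i = j then (h i : Matrix (Fin r) (Fin r) ℂ) else 0) =
        ofBlockCols r 4 ![fromRows 1 0, fromRows 0 1, fromRows 1 (-1), fromRows 1 (-x)] := by
  obtain ⟨g, h, x, hgh⟩ := exists_mul_mul_eq_normalFormCols hz
  have hx := det_fromCols_ne_zero_of_mul_mul_eq hgh (hz 0 3 (by decide))
  have hx' := det_fromCols_ne_zero_of_mul_mul_eq hgh (hz 2 3 (by decide))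
  rw [det_fromCols_normalFormCols_zero_three, det_neg] at hx
  rw [det_fromCols_normalFormCols_two_three] at hx'
  refine ⟨g, h, x, right_ne_zero_of_mul hx, hx', ?_⟩
  rw [ofBlockCols_mul_ofBlockMat_diagonal]
  exact congrArg _ (funext hgh)

/-- Normal form lemma for `(m, N) = (2r, 4r)`, partition `λ = (1,1,1,1)`:
any `z = (z₁, z₂, z₃, z₄)` with `det(zᵢ | zⱼ) ≠ 0` for `i < j` can be brought, by the
action of `GL(2r, ℂ) × H_{(1,1,1,1)}`, to the normal form with block rows
`(1_r, 0, 1_r, 1_r)` and `(0, 1_r, −1_r, −x)` with `det x ≠ 0` and `det(1_r − x) ≠ 0`. -/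
theorem normal_form_partition_1111 (r : ℕ) (hr : 1 ≤ r)
    (z : Fin 4 → Matrix (Fin r ⊕ Fin r) (Fin r) ℂ)
    (hz : ∀ i j : Fin 4, i < j → (fromCols (z i) (z j)).det ≠ 0) :
    ∃ (g : GL (Fin r ⊕ Fin r) ℂ) (h : Fin 4 → GL (Fin r) ℂ)
      (x : Matrix (Fin r) (Fin r) ℂ),
      x.det ≠ 0 ∧ ((1 : Matrix (Fin r) (Fin r) ℂ) - x).det ≠ 0 ∧
      (g : Matrix (Fin r ⊕ Fin r) (Fin r ⊕ Fin r) ℂ) * ofBlockCols r 4 z *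
          ofBlockMat r 4 (fun i j => if i = j then (h i : Matrix (Fin r) (Fin r) ℂ) else 0) =
        ofBlockCols r 4 ![fromRows 1 0, fromRows 0 1, fromRows 1 (-1), fromRows 1 (-x)] :=
  normal_form_partition_1111_general r z hz
end
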